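/- arXiv:0804.1299 — 2 statements merged into one kernel-verified Lean document; each statement's English description precedes it below -/
import Mathlib

section
/- For every positive integer m and all coprime positive integers a and b, one has I(a·b, m) = I(a,m) · I(b,m). -/
/-- Two points `u, v ∈ (ℤ/nℤ)^m` are at integral distance if there exists
`d ∈ ℤ/nℤ` with `∑ i, (u i - v i)^2 = d^2`. -/
def IntegralDistance (n : ℕ) {m : ℕ} (u v : Fin m → ZMod n) : Prop :=
  ∃ d : ZMod n, ∑ i, (u i - v i) ^ 2 = d ^ 2

/-- `maxIntegralCard n m` is the maximum cardinality of a subset of `(ℤ/nℤ)^m`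
whose points are pairwise at integral distance. -/
noncomputable def maxIntegralCard (n m : ℕ) : ℕ :=
  sSup {k : ℕ | ∃ S : Finset (Fin m → ZMod n),
    (∀ u ∈ S, ∀ v ∈ S, IntegralDistance n u v) ∧ S.card = k}

/-!
By the Chinese remainder theorem, `ℤ/abℤ ≅ ℤ/aℤ × ℤ/bℤ`, so a point of `(ℤ/abℤ)^m` is a pair of
points of `(ℤ/aℤ)^m` and `(ℤ/bℤ)^m`; since an element of a product ring is a square exactly when
both components are, two points are at integral distance iff both pairs of components are.
Hence a product of integral point sets is integral, and every integral point set lies inside the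
product of its two projections, which are integral.
-/

theorem Prod.isSquare_iff {α β : Type*} [Mul α] [Mul β] {x : α × β} :
    IsSquare x ↔ IsSquare x.1 ∧ IsSquare x.2 :=
  ⟨fun ⟨r, hr⟩ => ⟨⟨r.1, congrArg Prod.fst hr⟩, ⟨r.2, congrArg Prod.snd hr⟩⟩,
    fun ⟨⟨r, hr⟩, ⟨s, hs⟩⟩ => ⟨(r, s), Prod.ext hr hs⟩⟩

theorem isSquare_map_iff {α β F : Type*} [MulOneClass α] [MulOneClass β] [EquivLike F α β]
    [MulEquivClass F α β] (f : F) {a : α} : IsSquare (f a) ↔ IsSquare a :=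
  ⟨fun h => by simpa using h.map (MulEquivClass.toMulEquiv f).symm, IsSquare.map f⟩

section

variable {n k l m : ℕ}

def IsIntegralPointSet (S : Finset (Fin m → ZMod n)) : Prop :=
  ∀ u ∈ S, ∀ v ∈ S, IntegralDistance n u v

theorem integralDistance_iff_isSquare (u v : Fin m → ZMod n) :
    IntegralDistance n u v ↔ IsSquare (∑ i, (u i - v i) ^ 2) :=
  (isSquare_iff_exists_sq _).symm

theorem bddAbove_card_isIntegralPointSet [NeZero n] :
    BddAbove {c | ∃ S : Finset (Fin m → ZMod n), IsIntegralPointSet S ∧ S.card = c} :=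
  ⟨Fintype.card (Fin m → ZMod n), by rintro _ ⟨S, -, rfl⟩; exact S.card_le_univ⟩

theorem le_maxIntegralCard [NeZero n] {S : Finset (Fin m → ZMod n)} (hS : IsIntegralPointSet S) :
    S.card ≤ maxIntegralCard n m :=
  le_csSup bddAbove_card_isIntegralPointSet ⟨S, hS, rfl⟩

theorem exists_isIntegralPointSet_card_eq_maxIntegralCard [NeZero n] :
    ∃ S : Finset (Fin m → ZMod n), IsIntegralPointSet S ∧ S.card = maxIntegralCard n m :=
  Nat.sSup_mem (s := {c | ∃ S : Finset (Fin m → ZMod n), IsIntegralPointSet S ∧ S.card = c})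
    ⟨0, ∅, by simp [IsIntegralPointSet]⟩ bddAbove_card_isIntegralPointSet

theorem maxIntegralCard_le {c : ℕ}
    (h : ∀ S : Finset (Fin m → ZMod n), IsIntegralPointSet S → S.card ≤ c) :
    maxIntegralCard n m ≤ c :=
  csSup_le ⟨0, ∅, by simp⟩ (by rintro _ ⟨S, hS, rfl⟩; exact h S hS)

def splitPoint (f : ZMod n ≃+* ZMod k × ZMod l) :
    (Fin m → ZMod n) ≃ (Fin m → ZMod k) × (Fin m → ZMod l) :=
  (Equiv.piCongrRight fun _ => f.toEquiv).trans (Equiv.arrowProdEquivProdArrow _ _ _)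

theorem integralDistance_iff_splitPoint (f : ZMod n ≃+* ZMod k × ZMod l) (u v : Fin m → ZMod n) :
    IntegralDistance n u v ↔ IntegralDistance k (splitPoint f u).1 (splitPoint f v).1 ∧
      IntegralDistance l (splitPoint f u).2 (splitPoint f v).2 := by
  simp only [integralDistance_iff_isSquare, ← isSquare_map_iff f, Prod.isSquare_iff]
  simp [splitPoint, map_sum, Prod.fst_sum, Prod.snd_sum]

theorem maxIntegralCard_le_mul [NeZero k] [NeZero l] (f : ZMod n ≃+* ZMod k × ZMod l) :
    maxIntegralCard n m ≤ maxIntegralCard k m * maxIntegralCard l m := by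
  refine maxIntegralCard_le fun S hS => ?_
  set T := S.map (splitPoint f).toEmbedding
  have hT : ∀ p ∈ T, ∀ q ∈ T, IntegralDistance k p.1 q.1 ∧ IntegralDistance l p.2 q.2 := by
    simp only [T, Finset.forall_mem_map, Equiv.coe_toEmbedding, ← integralDistance_iff_splitPoint]
    exact hS
  have hfst : IsIntegralPointSet (T.image Prod.fst) := by
    simp only [IsIntegralPointSet, Finset.forall_mem_image]
    exact fun p hp q hq => (hT p hp q hq).1
  have hsnd : IsIntegralPointSet (T.image Prod.snd) := by
    simp only [IsIntegralPointSet, Finset.forall_mem_image]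
    exact fun p hp q hq => (hT p hp q hq).2
  calc S.card = T.card := (Finset.card_map _).symm
    _ ≤ (T.image Prod.fst ×ˢ T.image Prod.snd).card := Finset.card_le_card Finset.subset_product
    _ = (T.image Prod.fst).card * (T.image Prod.snd).card := Finset.card_product _ _
    _ ≤ maxIntegralCard k m * maxIntegralCard l m :=
      Nat.mul_le_mul (le_maxIntegralCard hfst) (le_maxIntegralCard hsnd)

theorem mul_le_maxIntegralCard [NeZero n] [NeZero k] [NeZero l] (f : ZMod n ≃+* ZMod k × ZMod l) :
    maxIntegralCard k m * maxIntegralCard l m ≤ maxIntegralCard n m := by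
  obtain ⟨A, hA, hA_card⟩ := exists_isIntegralPointSet_card_eq_maxIntegralCard (n := k) (m := m)
  obtain ⟨B, hB, hB_card⟩ := exists_isIntegralPointSet_card_eq_maxIntegralCard (n := l) (m := m)
  have hAB : IsIntegralPointSet ((A ×ˢ B).map (splitPoint f).symm.toEmbedding) := by
    simp only [IsIntegralPointSet, Finset.forall_mem_map, Equiv.coe_toEmbedding,
      integralDistance_iff_splitPoint f, Equiv.apply_symm_apply, Finset.mem_product]
    exact fun p hp q hq => ⟨hA _ hp.1 _ hq.1, hB _ hp.2 _ hq.2⟩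
  calc maxIntegralCard k m * maxIntegralCard l m = (A ×ˢ B).card := by
        rw [Finset.card_product, hA_card, hB_card]
    _ = ((A ×ˢ B).map (splitPoint f).symm.toEmbedding).card := (Finset.card_map _).symm
    _ ≤ maxIntegralCard n m := le_maxIntegralCard hAB

theorem maxIntegralCard_eq_mul [NeZero n] [NeZero k] [NeZero l] (f : ZMod n ≃+* ZMod k × ZMod l) :
    maxIntegralCard n m = maxIntegralCard k m * maxIntegralCard l m :=
  (maxIntegralCard_le_mul f).antisymm (mul_le_maxIntegralCard f)

end

theorem maxIntegralCard_mul_of_coprime_general (m a b : ℕ)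
    (ha : 0 < a) (hb : 0 < b) (hab : Nat.Coprime a b) :
    maxIntegralCard (a * b) m = maxIntegralCard a m * maxIntegralCard b m := by
  have : NeZero a := ⟨ha.ne'⟩
  have : NeZero b := ⟨hb.ne'⟩
  have : NeZero (a * b) := ⟨(Nat.mul_pos ha hb).ne'⟩
  exact maxIntegralCard_eq_mul (ZMod.chineseRemainder hab)

theorem maxIntegralCard_mul_of_coprime (m a b : ℕ) (hm : 0 < m)
    (ha : 0 < a) (hb : 0 < b) (hab : Nat.Coprime a b) :
    maxIntegralCard (a * b) m = maxIntegralCard a m * maxIntegralCard b m :=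
  maxIntegralCard_mul_of_coprime_general m a b ha hb hab
end

section
/- Let p be a prime with p ≡ 1 (mod 4). Then (p−1)/2 ≤ \overline{I}(p,2) ≤ (p+3)/2; that is, the maximum cardinality of a subset of (ℤ/pℤ)² whose points are pairwise at integral distance and no three of whose points are collinear lies between (p−1)/2 and (p+3)/2. -/
/-- Two points `u, v ∈ (ℤ/nℤ)²` are at integral distance if there exists
`d ∈ ℤ/nℤ` with `(u₁ - v₁)² + (u₂ - v₂)² = d²`. -/
def IntegralDistance2 (n : ℕ) (u v : ZMod n × ZMod n) : Prop :=
  ∃ d : ZMod n, (u.1 - v.1) ^ 2 + (u.2 - v.2) ^ 2 = d ^ 2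

/-- Points `p₁, p₂, p₃ ∈ (ℤ/nℤ)²` are collinear if there are
`a, b, t₁, t₂, wᵢ ∈ ℤ/nℤ` with `pᵢ = (a + wᵢ·t₁, b + wᵢ·t₂)`. -/
def Collinear3 (n : ℕ) (p₁ p₂ p₃ : ZMod n × ZMod n) : Prop :=
  ∃ a b t₁ t₂ w₁ w₂ w₃ : ZMod n,
    p₁.1 = a + w₁ * t₁ ∧ p₁.2 = b + w₁ * t₂ ∧
    p₂.1 = a + w₂ * t₁ ∧ p₂.2 = b + w₂ * t₂ ∧
    p₃.1 = a + w₃ * t₁ ∧ p₃.2 = b + w₃ * t₂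

/-- A set of points of `(ℤ/nℤ)²` is in semi-general position if no three of its
points are collinear. -/
def SemiGeneralPosition (n : ℕ) (S : Finset (ZMod n × ZMod n)) : Prop :=
  ∀ p₁ ∈ S, ∀ p₂ ∈ S, ∀ p₃ ∈ S,
    p₁ ≠ p₂ → p₁ ≠ p₃ → p₂ ≠ p₃ → ¬ Collinear3 n p₁ p₂ p₃

/-- `maxIntegralCardSGP n` (denoted `Ī(n,2)` in the paper) is the maximum
cardinality of a subset of `(ℤ/nℤ)²` with pairwise integral distances and
no three points collinear. -/
noncomputable def maxIntegralCardSGP (n : ℕ) : ℕ :=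
  sSup {k : ℕ | ∃ S : Finset (ZMod n × ZMod n),
    (∀ u ∈ S, ∀ v ∈ S, IntegralDistance2 n u v) ∧
      SemiGeneralPosition n S ∧ S.card = k}



/-!
Choose `c ∈ 𝔽_p` with `c² = -1`. The linear coordinates `u = x + c y`, `v = x - c y` turn
`x² + y²` into `u v`, so two points are at integral distance exactly when `Δu · Δv` is a square,
and collinearity is unchanged.

Upper bound: seen from a point `P` of such a set, every other point either lies on the vertical
line through `P` (at most one does) or has slope `Δv / Δu = Δu Δv / Δu²`, a square; different
points have different slopes since no three points are collinear. As there are `(p + 1) / 2`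
squares, this gives at most `(p + 5) / 2` points, and equality would force every vertical line
through the set to carry exactly two of its points, so the size would be even, whereas
`(p + 5) / 2` is odd for `p ≡ 1 (mod 4)`.

Lower bound: the hyperbola `u v = 1` meets every line in at most two points, and for its points
`(z, 1/z)`, `(w, 1/w)` one has `Δu Δv = -(z - w)² / (z w)`, a square when `z` and `w` are.
-/

open Finset

theorem Finset.card_eq_mul_card_image_of_card_fiber {α β : Type*} [DecidableEq β]
    {s : Finset α} {f : α → β} {n : ℕ} (h : ∀ b ∈ s.image f, #{a ∈ s | f a = b} = n) :
    #s = n * #(s.image f) :=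
  le_antisymm (card_le_mul_card_image s n fun b hb => (h b hb).le)
    (mul_card_image_le_card s n fun b hb => (h b hb).ge)

section Squares

variable {F : Type*} [Field F] [Fintype F] [DecidableEq F]

theorem filter_erase_zero_sq_eq_sq {r : F} (hr : r ≠ 0) :
    {x ∈ univ.erase (0 : F) | x ^ 2 = r ^ 2} = {r, -r} := by
  ext x
  simp only [mem_filter, mem_erase, mem_univ, and_true, mem_insert, mem_singleton,
    sq_eq_sq_iff_eq_or_eq_neg]
  constructor
  · exact And.right
  · rintro (rfl | rfl) <;> simp [hr]

theorem two_mul_card_image_sq_erase_zero (h2 : (2 : F) ≠ 0) :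
    2 * #((univ.erase (0 : F)).image (· ^ 2)) = Fintype.card F - 1 := by
  rw [← card_univ, ← card_erase_of_mem (mem_univ 0)]
  refine (card_eq_mul_card_image_of_card_fiber ?_).symm
  simp only [mem_image, mem_erase]
  rintro _ ⟨r, ⟨hr, -⟩, rfl⟩
  refine (filter_erase_zero_sq_eq_sq hr).symm ▸ card_pair fun h => hr ?_
  exact mul_left_cancel₀ h2 (by linear_combination h)

theorem card_image_sq_le (h2 : (2 : F) ≠ 0) :
    #(univ.image (· ^ 2 : F → F)) ≤ (Fintype.card F + 1) / 2 := by
  have hpos : 0 < Fintype.card F := Fintype.card_pos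
  have hnz := two_mul_card_image_sq_erase_zero h2
  have hsplit : univ.image (· ^ 2 : F → F) = insert 0 ((univ.erase 0).image (· ^ 2)) := by
    conv_lhs => rw [← insert_erase (mem_univ (0 : F)), image_insert]
    simp
  rw [hsplit]
  have := card_insert_le (0 : F) ((univ.erase 0).image (· ^ 2))
  omega

end Squares

section Isotropic

variable {F : Type*} [Field F] {c : F}

theorem ne_zero_of_sq_eq_neg_one (hc : c ^ 2 = -1) : c ≠ 0 := by
  rintro rfl
  simp at hc

def isotropicEquiv (hc : c ^ 2 = -1) (h2 : (2 : F) ≠ 0) : (F × F) ≃ₗ[F] F × F where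
  toFun q := (q.1 + c * q.2, q.1 - c * q.2)
  invFun q := ((q.1 + q.2) / 2, (q.1 - q.2) / (2 * c))
  map_add' q r := by ext <;> simp only [Prod.fst_add, Prod.snd_add] <;> ring
  map_smul' a q := by ext <;> simp only [Prod.smul_fst, Prod.smul_snd, smul_eq_mul,
    RingHom.id_apply] <;> ring
  left_inv q := by
    have := ne_zero_of_sq_eq_neg_one hc
    ext <;> field_simp <;> ring
  right_inv q := by
    have := ne_zero_of_sq_eq_neg_one hc
    ext <;> field_simp <;> ring

theorem isotropicEquiv_fst_mul_snd (hc : c ^ 2 = -1) (h2 : (2 : F) ≠ 0) (q : F × F) :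
    (isotropicEquiv hc h2 q).1 * (isotropicEquiv hc h2 q).2 = q.1 ^ 2 + q.2 ^ 2 := by
  change (q.1 + c * q.2) * (q.1 - c * q.2) = _
  linear_combination (-q.2 ^ 2) * hc

theorem isSquare_sq_sub_sq_mul_inv_sub_inv (hc : c ^ 2 = -1) {r s : F} (hr : r ≠ 0)
    (hs : s ≠ 0) : IsSquare ((r ^ 2 - s ^ 2) * ((r ^ 2)⁻¹ - (s ^ 2)⁻¹)) := by
  refine ⟨c * (r ^ 2 - s ^ 2) / (r * s), ?_⟩
  field_simp
  linear_combination (-(r ^ 2 - s ^ 2) ^ 2) * hc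

end Isotropic

section Collinear

variable {n : ℕ} {q₁ q₂ q₃ : ZMod n × ZMod n}

theorem Collinear3.map (f : (ZMod n × ZMod n) →ₗ[ZMod n] ZMod n × ZMod n)
    (h : Collinear3 n q₁ q₂ q₃) : Collinear3 n (f q₁) (f q₂) (f q₃) := by
  obtain ⟨a, b, t₁, t₂, w₁, w₂, w₃, h₁₁, h₁₂, h₂₁, h₂₂, h₃₁, h₃₂⟩ := h
  have hf : ∀ {q : ZMod n × ZMod n} {w}, q.1 = a + w * t₁ → q.2 = b + w * t₂ →
      f q = f (a, b) + w • f (t₁, t₂) := by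
    intro q w hq₁ hq₂
    rw [← map_smul, ← map_add]
    congr 1
    ext <;> simp [hq₁, hq₂]
  refine ⟨(f (a, b)).1, (f (a, b)).2, (f (t₁, t₂)).1, (f (t₁, t₂)).2, w₁, w₂, w₃, ?_⟩
  simp [hf h₁₁ h₁₂, hf h₂₁ h₂₂, hf h₃₁ h₃₂]

theorem Collinear3.sub_mul_sub_eq (h : Collinear3 n q₁ q₂ q₃) :
    (q₂.1 - q₁.1) * (q₃.2 - q₁.2) = (q₂.2 - q₁.2) * (q₃.1 - q₁.1) := by
  obtain ⟨a, b, t₁, t₂, w₁, w₂, w₃, h₁₁, h₁₂, h₂₁, h₂₂, h₃₁, h₃₂⟩ := h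
  rw [h₁₁, h₁₂, h₂₁, h₂₂, h₃₁, h₃₂]
  ring

theorem collinear3_of_fst_eq (h₂ : q₂.1 = q₁.1) (h₃ : q₃.1 = q₁.1) : Collinear3 n q₁ q₂ q₃ :=
  ⟨q₁.1, 0, 0, 1, q₁.2, q₂.2, q₃.2, by simp [h₂, h₃]⟩

theorem collinear3_of_slope (m : ZMod n) (h₂ : q₂.2 - q₁.2 = (q₂.1 - q₁.1) * m)
    (h₃ : q₃.2 - q₁.2 = (q₃.1 - q₁.1) * m) : Collinear3 n q₁ q₂ q₃ :=
  ⟨q₁.1, q₁.2, 1, m, 0, q₂.1 - q₁.1, q₃.1 - q₁.1, by simp, by simp,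
    by ring, by linear_combination h₂, by ring, by linear_combination h₃⟩

theorem SemiGeneralPosition.image_linearEquiv {S : Finset (ZMod n × ZMod n)}
    (hS : SemiGeneralPosition n S) (e : (ZMod n × ZMod n) ≃ₗ[ZMod n] ZMod n × ZMod n) :
    SemiGeneralPosition n (S.image e) := by
  simp only [SemiGeneralPosition, mem_image, forall_exists_index, and_imp,
    forall_apply_eq_imp_iff₂]
  intro q₁ h₁ q₂ h₂ q₃ h₃ h₁₂ h₁₃ h₂₃ hcol
  refine hS q₁ h₁ q₂ h₂ q₃ h₃ (ne_of_apply_ne e h₁₂) (ne_of_apply_ne e h₁₃)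
    (ne_of_apply_ne e h₂₃) ?_
  simpa using hcol.map e.symm.toLinearMap

theorem card_filter_fst_eq_le_two {S : Finset (ZMod n × ZMod n)}
    (hS : SemiGeneralPosition n S) (x : ZMod n) : #{q ∈ S | q.1 = x} ≤ 2 := by
  by_contra! h
  obtain ⟨a, ha, b, hb, d, hd, hab, had, hbd⟩ := two_lt_card.mp h
  rw [mem_filter] at ha hb hd
  exact hS a ha.1 b hb.1 d hd.1 hab had hbd
    (collinear3_of_fst_eq (hb.2.trans ha.2.symm) (hd.2.trans ha.2.symm))

end Collinear

section MaxIntegralCard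

variable {n : ℕ}

theorem card_le_maxIntegralCardSGP [NeZero n] {S : Finset (ZMod n × ZMod n)}
    (hd : ∀ u ∈ S, ∀ v ∈ S, IntegralDistance2 n u v) (hs : SemiGeneralPosition n S) :
    #S ≤ maxIntegralCardSGP n :=
  le_csSup ⟨Fintype.card _, by rintro _ ⟨S, -, -, rfl⟩; exact card_le_univ S⟩ ⟨S, hd, hs, rfl⟩

theorem maxIntegralCardSGP_le {k : ℕ} (h : ∀ S : Finset (ZMod n × ZMod n),
    (∀ u ∈ S, ∀ v ∈ S, IntegralDistance2 n u v) → SemiGeneralPosition n S → #S ≤ k) :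
    maxIntegralCardSGP n ≤ k :=
  csSup_le' <| by rintro _ ⟨S, hd, hs, rfl⟩; exact h S hd hs

end MaxIntegralCard

section PrimeField

variable {p : ℕ} [Fact p.Prime]

theorem not_collinear3_hyperbola {z₁ z₂ z₃ : ZMod p} (h₁ : z₁ ≠ 0) (h₂ : z₂ ≠ 0) (h₃ : z₃ ≠ 0)
    (h₁₂ : z₁ ≠ z₂) (h₁₃ : z₁ ≠ z₃) (h₂₃ : z₂ ≠ z₃) :
    ¬ Collinear3 p (z₁, z₁⁻¹) (z₂, z₂⁻¹) (z₃, z₃⁻¹) := by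
  intro h
  have hcross := h.sub_mul_sub_eq
  field_simp at hcross
  have : (z₂ - z₁) * (z₁ - z₃) * (z₂ - z₃) = 0 := by linear_combination hcross
  simp [sub_eq_zero, h₁₂.symm, h₁₃, h₂₃] at this

theorem semiGeneralPosition_image_hyperbola {Z : Finset (ZMod p)} (hZ : 0 ∉ Z) :
    SemiGeneralPosition p (Z.image fun z => (z, z⁻¹)) := by
  simp only [SemiGeneralPosition, mem_image, forall_exists_index, and_imp,
    forall_apply_eq_imp_iff₂]
  intro z₁ h₁ z₂ h₂ z₃ h₃ h₁₂ h₁₃ h₂₃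
  have hinj {a b : ZMod p} (h : (a, a⁻¹) ≠ (b, b⁻¹)) : a ≠ b := fun hab => h (hab ▸ rfl)
  exact not_collinear3_hyperbola (ne_of_mem_of_not_mem h₁ hZ) (ne_of_mem_of_not_mem h₂ hZ)
    (ne_of_mem_of_not_mem h₃ hZ) (hinj h₁₂) (hinj h₁₃) (hinj h₂₃)

theorem card_filter_fst_ne_le (h2 : (2 : ZMod p) ≠ 0) {T : Finset (ZMod p × ZMod p)}
    (hsq : ∀ a ∈ T, ∀ b ∈ T, IsSquare ((a.1 - b.1) * (a.2 - b.2)))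
    (hT : SemiGeneralPosition p T) {P : ZMod p × ZMod p} (hP : P ∈ T) :
    #{q ∈ T | q.1 ≠ P.1} ≤ (p + 1) / 2 := by
  let slope (q : ZMod p × ZMod p) : ZMod p := (q.2 - P.2) / (q.1 - P.1)
  have hmaps : ∀ q ∈ {q ∈ T | q.1 ≠ P.1}, slope q ∈ univ.image (· ^ 2) := by
    intro q hq
    rw [mem_filter] at hq
    obtain ⟨d, hd⟩ := hsq q hq.1 P hP
    have : q.1 - P.1 ≠ 0 := sub_ne_zero.mpr hq.2
    refine mem_image.mpr ⟨d / (q.1 - P.1), mem_univ _, ?_⟩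
    simp only [slope]
    field_simp
    linear_combination -hd
  have hinj : Set.InjOn slope ({q ∈ T | q.1 ≠ P.1} : Finset _) := by
    intro q hq r hr hqr
    simp only [mem_coe, mem_filter] at hq hr
    by_contra hne
    refine hT P hP q hq.1 r hr.1 (fun h => hq.2 (congrArg Prod.fst h.symm))
      (fun h => hr.2 (congrArg Prod.fst h.symm)) hne (collinear3_of_slope (slope q) ?_ ?_)
    · simp only [slope]
      field_simp [sub_ne_zero.mpr hq.2]
    · simp only [hqr, slope]
      field_simp [sub_ne_zero.mpr hr.2]
  calc #{q ∈ T | q.1 ≠ P.1}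
      ≤ #(univ.image (· ^ 2 : ZMod p → ZMod p)) := card_le_card_of_injOn slope hmaps hinj
    _ ≤ (p + 1) / 2 := by simpa using card_image_sq_le h2

theorem card_le_of_forall_isSquare_mul (hp4 : p % 4 = 1) (h2 : (2 : ZMod p) ≠ 0)
    {T : Finset (ZMod p × ZMod p)}
    (hsq : ∀ a ∈ T, ∀ b ∈ T, IsSquare ((a.1 - b.1) * (a.2 - b.2)))
    (hT : SemiGeneralPosition p T) : #T ≤ (p + 3) / 2 := by
  have hsplit : ∀ P ∈ T, #T ≤ #{q ∈ T | q.1 = P.1} + (p + 1) / 2 := fun P hP => by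
    rw [← card_filter_add_card_filter_not (fun q => q.1 = P.1)]
    exact Nat.add_le_add_left (card_filter_fst_ne_le h2 hsq hT hP) _
  by_contra! hlarge
  have hpairs : ∀ P ∈ T, #{q ∈ T | q.1 = P.1} = 2 := fun P hP =>
    (card_filter_fst_eq_le_two hT P.1).antisymm (by have := hsplit P hP; omega)
  have heven : #T = 2 * #(T.image Prod.fst) := card_eq_mul_card_image_of_card_fiber <| by
    simp only [mem_image]
    rintro _ ⟨P, hP, rfl⟩
    exact hpairs P hP
  obtain ⟨P, hP⟩ : T.Nonempty := card_pos.mp (by omega)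
  have := hsplit P hP
  rw [hpairs P hP] at this
  -- now `#T = (p + 5) / 2`, which is odd because `p ≡ 1 (mod 4)`
  omega

variable {c : ZMod p}

theorem integralDistance2_iff_isSquare (hc : c ^ 2 = -1) (h2 : (2 : ZMod p) ≠ 0)
    (u v : ZMod p × ZMod p) :
    IntegralDistance2 p u v ↔ IsSquare (((isotropicEquiv hc h2 u).1 - (isotropicEquiv hc h2 v).1) *
      ((isotropicEquiv hc h2 u).2 - (isotropicEquiv hc h2 v).2)) := by
  rw [← Prod.fst_sub, ← Prod.snd_sub, ← map_sub, isotropicEquiv_fst_mul_snd]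
  simp only [IntegralDistance2, IsSquare, Prod.fst_sub, Prod.snd_sub, sq]

theorem card_le_of_integralDistance2 (hp4 : p % 4 = 1) (hc : c ^ 2 = -1)
    (h2 : (2 : ZMod p) ≠ 0) {S : Finset (ZMod p × ZMod p)}
    (hd : ∀ u ∈ S, ∀ v ∈ S, IntegralDistance2 p u v) (hs : SemiGeneralPosition p S) :
    #S ≤ (p + 3) / 2 := by
  rw [← card_image_of_injective S (isotropicEquiv hc h2).injective]
  refine card_le_of_forall_isSquare_mul hp4 h2 ?_ (hs.image_linearEquiv _)
  simp only [mem_image, forall_exists_index, and_imp, forall_apply_eq_imp_iff₂]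
  exact fun u hu v hv => (integralDistance2_iff_isSquare hc h2 u v).mp (hd u hu v hv)

theorem exists_integralDistance2_card_eq (hc : c ^ 2 = -1) (h2 : (2 : ZMod p) ≠ 0) :
    ∃ S : Finset (ZMod p × ZMod p), (∀ u ∈ S, ∀ v ∈ S, IntegralDistance2 p u v) ∧
      SemiGeneralPosition p S ∧ #S = (p - 1) / 2 := by
  have hcard := two_mul_card_image_sq_erase_zero h2
  rw [ZMod.card] at hcard
  set Z := (univ.erase (0 : ZMod p)).image (· ^ 2)
  have hZ : 0 ∉ Z := by simp [Z]
  refine ⟨(Z.image fun z => (z, z⁻¹)).image (isotropicEquiv hc h2).symm, ?_,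
    (semiGeneralPosition_image_hyperbola hZ).image_linearEquiv _, ?_⟩
  · simp only [Z, mem_image, mem_erase, mem_univ, and_true]
    rintro _ ⟨_, ⟨_, ⟨r, hr, rfl⟩, rfl⟩, rfl⟩ _ ⟨_, ⟨_, ⟨s, hs, rfl⟩, rfl⟩, rfl⟩
    rw [integralDistance2_iff_isSquare hc h2, LinearEquiv.apply_symm_apply,
      LinearEquiv.apply_symm_apply]
    exact isSquare_sq_sub_sq_mul_inv_sub_inv hc hr hs
  · rw [card_image_of_injective _ (LinearEquiv.injective _),
      card_image_of_injective _ fun a b h => congrArg Prod.fst h]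
    omega

end PrimeField

theorem maxIntegralCardSGP_of_one_mod_four (p : ℕ) (hp : p.Prime)
    (hp4 : p % 4 = 1) :
    (p - 1) / 2 ≤ maxIntegralCardSGP p ∧ maxIntegralCardSGP p ≤ (p + 3) / 2 := by
  have := Fact.mk hp
  obtain ⟨c, hc⟩ := ZMod.exists_sq_eq_neg_one_iff.mpr (by omega : p % 4 ≠ 3)
  have hc : c ^ 2 = -1 := (sq c).trans hc.symm
  have h2 : (2 : ZMod p) ≠ 0 := Ring.two_ne_zero (by rw [ZMod.ringChar_zmod_n]; omega)
  obtain ⟨S, hd, hs, hcard⟩ := exists_integralDistance2_card_eq hc h2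
  exact ⟨hcard ▸ card_le_maxIntegralCardSGP hd hs,
    maxIntegralCardSGP_le fun _ => card_le_of_integralDistance2 hp4 hc h2⟩
end
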